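/- arXiv:1806.00111 — 4 statements merged into one kernel-verified Lean document; each statement's English description precedes it below -/
import Mathlib

section
/- Let D ≥ 1, N ≥ 1, let x_1, …, x_N ∈ ℝ^D, let τ_1, …, τ_N ≥ 0 with ∑_n τ_n > 0, let ν > 0, and let Σ be a symmetric positive-definite D×D real matrix. Define F : ℝ^D → ℝ by F(μ) = ∑_{n=1}^{N} τ_n · ((D+ν)/2) · ln(1 + (x_n − μ)ᵀ Σ⁻¹ (x_n − μ)/ν). If μ is a critical point of F (i.e. the Fréchet derivative of F at μ vanishes), then, setting ω_n = (ν + D)/(ν + (x_n − μ)ᵀ Σ⁻¹ (x_n − μ)), one has ∑_n τ_n ω_n > 0 and μ = (∑_{n=1}^{N} τ_n ω_n x_n)/(∑_{n=1}^{N} τ_n ω_n). (This is the location-update equation (6) of Proposition 1: F equals, up to an additive constant independent of μ, the τ-weighted negative log-likelihood of the multivariate Student-t density with parameters (ν, μ, Σ).) -/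
/-!
Write `q_n(μ) = (x_n - μ)ᵀ Σ⁻¹ (x_n - μ)`. Its gradient is `-(Σ⁻¹ + Σ⁻ᵀ)(x_n - μ)`, and
`d/ds [((D+ν)/2) log (1 + s/ν)] = ((D+ν)/2) / (ν + s)` equals `ω_n / 2` at `s = q_n`, so
`∇F(μ) = -(Σ⁻¹ + Σ⁻ᵀ) ∑ τ_n (ω_n / 2) (x_n - μ)`. Since `Σ⁻¹ + Σ⁻ᵀ` is positive definite, hence
invertible, a critical point satisfies `∑ τ_n ω_n (x_n - μ) = 0`, which is the fixed-point
equation. Positive definiteness of `Σ⁻¹` also gives `q_n ≥ 0`, so `ω_n > 0` and the normalising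
sum is positive.
-/

open Matrix

section QuadraticForm

variable {n : Type*} [Fintype n]

noncomputable def dotProductCLM (w : n → ℝ) : (n → ℝ) →L[ℝ] ℝ :=
  LinearMap.toContinuousLinearMap (dotProductBilin ℝ ℝ w)

@[simp] theorem dotProductCLM_apply (w v : n → ℝ) : dotProductCLM w v = w ⬝ᵥ v := rfl

theorem dotProductCLM_eq_zero_iff {w : n → ℝ} : dotProductCLM w = 0 ↔ w = 0 := by
  refine ⟨fun h => dotProduct_self_eq_zero.mp ?_, fun h => ?_⟩
  · simpa using congr($h w)
  · ext v; simp [h]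

theorem hasFDerivAt_dotProduct_mulVec (A : Matrix n n ℝ) (v : n → ℝ) :
    HasFDerivAt (fun w => w ⬝ᵥ (A *ᵥ w)) (dotProductCLM ((A + Aᵀ) *ᵥ v)) v := by
  let M : (n → ℝ) →L[ℝ] (n → ℝ) := LinearMap.toContinuousLinearMap A.mulVecLin
  have h := HasFDerivAt.fun_sum (u := Finset.univ) fun i _ =>
    (hasFDerivAt_apply i v).mul ((hasFDerivAt_apply i (M v)).comp v M.hasFDerivAt)
  refine h.congr_fderiv ?_
  ext w
  have hsym := dotProduct_mulVec v A w
  simp only [dotProduct] at hsym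
  simp [M, dotProduct, add_mulVec, mulVec_transpose, Finset.sum_add_distrib, hsym, mul_comm,
    mul_add, add_comm]

/-- `d_Σ(x, μ)²` with `A = Σ⁻¹`. -/
def mahalanobisSq (A : Matrix n n ℝ) (x μ : n → ℝ) : ℝ := (x - μ) ⬝ᵥ (A *ᵥ (x - μ))

theorem mahalanobisSq_nonneg {A : Matrix n n ℝ} (hA : A.PosSemidef) (x μ : n → ℝ) :
    0 ≤ mahalanobisSq A x μ := by
  have h := hA.dotProduct_mulVec_nonneg (x - μ)
  rwa [star_trivial] at h

theorem hasFDerivAt_mahalanobisSq (A : Matrix n n ℝ) (x μ : n → ℝ) :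
    HasFDerivAt (mahalanobisSq A x) (-dotProductCLM ((A + Aᵀ) *ᵥ (x - μ))) μ := by
  have h := (hasFDerivAt_dotProduct_mulVec A (x - μ)).comp μ ((hasFDerivAt_id μ).const_sub x)
  rwa [ContinuousLinearMap.comp_neg, ContinuousLinearMap.comp_id] at h

end QuadraticForm

theorem hasDerivAt_log_one_add_div {ν s : ℝ} (hν : ν ≠ 0) (hs : ν + s ≠ 0) :
    HasDerivAt (fun s => Real.log (1 + s / ν)) (1 / (ν + s)) s := by
  have h1 : 1 + s / ν ≠ 0 := by
    rwa [one_add_div hν, div_ne_zero_iff, and_iff_left hν]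
  refine ((((hasDerivAt_id s).div_const ν).const_add 1).log h1).congr_deriv ?_
  simp only [id]
  field_simp

section CriticalPoint

variable {n ι : Type*} [Fintype n] [DecidableEq n] [Fintype ι]

theorem sum_smul_sub_eq_zero_of_fderiv_eq_zero {A : Matrix n n ℝ} (hA : IsUnit (A + Aᵀ))
    (x : ι → n → ℝ) (φ : ι → ℝ → ℝ) (φ' : ι → ℝ) (μ : n → ℝ)
    (hφ : ∀ k, HasDerivAt (φ k) (φ' k) (mahalanobisSq A (x k) μ))
    (hcrit : fderiv ℝ (fun μ => ∑ k, φ k (mahalanobisSq A (x k) μ)) μ = 0) :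
    ∑ k, φ' k • (x k - μ) = 0 := by
  have hF : HasFDerivAt (fun μ => ∑ k, φ k (mahalanobisSq A (x k) μ))
      (-dotProductCLM ((A + Aᵀ) *ᵥ ∑ k, φ' k • (x k - μ))) μ := by
    refine (HasFDerivAt.fun_sum fun k _ =>
      (hφ k).comp_hasFDerivAt μ (hasFDerivAt_mahalanobisSq A (x k) μ)).congr_fderiv ?_
    ext v
    simp [mulVec_sum, mulVec_smul, sum_dotProduct]
  rw [hF.fderiv, neg_eq_zero, dotProductCLM_eq_zero_iff, ← mulVec_zero (A + Aᵀ)] at hcrit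
  exact mulVec_injective_iff_isUnit.mpr hA hcrit

end CriticalPoint

theorem eq_inv_sum_smul_of_sum_smul_sub_eq_zero {ι K E : Type*} [Fintype ι] [Field K]
    [AddCommGroup E] [Module K E] {w : ι → K} {x : ι → E} {μ : E} (hw : ∑ k, w k ≠ 0)
    (h : ∑ k, w k • (x k - μ) = 0) : μ = (∑ k, w k)⁻¹ • ∑ k, w k • x k := by
  simp only [smul_sub, Finset.sum_sub_distrib, ← Finset.sum_smul, sub_eq_zero] at h
  rw [h, inv_smul_smul₀ hw]

theorem sum_mul_pos {ι : Type*} [Fintype ι] {τ ω : ι → ℝ} (hτ : ∀ k, 0 ≤ τ k)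
    (hτsum : 0 < ∑ k, τ k) (hω : ∀ k, 0 < ω k) : 0 < ∑ k, τ k * ω k := by
  obtain ⟨k, -, hk⟩ :=
    Finset.exists_lt_of_sum_lt (f := fun _ => (0 : ℝ)) (g := τ) (by rwa [Finset.sum_const_zero])
  exact Finset.sum_pos' (fun k _ => mul_nonneg (hτ k) (hω k).le)
    ⟨k, Finset.mem_univ k, mul_pos hk (hω k)⟩

theorem studentT_location_update_general
    (D N : ℕ)
    (x : Fin N → Fin D → ℝ) (τ : Fin N → ℝ) (hτ : ∀ n, 0 ≤ τ n)
    (hτsum : 0 < ∑ n, τ n) (ν : ℝ) (hν : 0 < ν)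
    (S : Matrix (Fin D) (Fin D) ℝ) (hS : S.PosDef)
    (F : (Fin D → ℝ) → ℝ)
    (hF : F = fun μ => ∑ n, τ n * (((D : ℝ) + ν) / 2) *
        Real.log (1 + (x n - μ) ⬝ᵥ (S⁻¹ *ᵥ (x n - μ)) / ν))
    (μ : Fin D → ℝ) (hcrit : fderiv ℝ F μ = 0)
    (ω : Fin N → ℝ)
    (hω : ω = fun n => (ν + (D : ℝ)) / (ν + (x n - μ) ⬝ᵥ (S⁻¹ *ᵥ (x n - μ)))) :
    0 < ∑ n, τ n * ω n ∧
      μ = (∑ n, τ n * ω n)⁻¹ • ∑ n, (τ n * ω n) • x n := by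
  subst hF hω
  have hq (k : Fin N) : 0 < ν + mahalanobisSq S⁻¹ (x k) μ :=
    add_pos_of_pos_of_nonneg hν (mahalanobisSq_nonneg hS.inv.posSemidef (x k) μ)
  have hpos : 0 < ∑ k, τ k * ((ν + D) / (ν + mahalanobisSq S⁻¹ (x k) μ)) :=
    sum_mul_pos hτ hτsum fun k => div_pos (add_pos_of_pos_of_nonneg hν D.cast_nonneg) (hq k)
  refine ⟨hpos, eq_inv_sum_smul_of_sum_smul_sub_eq_zero hpos.ne' ?_⟩
  have hstat := sum_smul_sub_eq_zero_of_fderiv_eq_zero (hS.inv.add hS.inv.transpose).isUnit x _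
    (fun k => τ k * ((D + ν) / 2) * (1 / (ν + mahalanobisSq S⁻¹ (x k) μ))) μ
    (fun k => (hasDerivAt_log_one_add_div hν.ne' (hq k).ne').const_mul _) hcrit
  calc ∑ k, (τ k * ((ν + D) / (ν + mahalanobisSq S⁻¹ (x k) μ))) • (x k - μ)
      = (2 : ℝ) • ∑ k,
          (τ k * ((D + ν) / 2) * (1 / (ν + mahalanobisSq S⁻¹ (x k) μ))) • (x k - μ) := by
        rw [Finset.smul_sum]
        exact Finset.sum_congr rfl fun k _ => by rw [smul_smul]; congr 1; ring
    _ = 0 := by rw [hstat, smul_zero]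

/-- location update, Equation 6 of Proposition 1: if `μ` is a critical point
of the τ-weighted negative Student-t log-likelihood
`F μ = ∑ n, τ n * ((D+ν)/2) * log (1 + (xₙ-μ)ᵀ Σ⁻¹ (xₙ-μ) / ν)`, then with
`ω n = (ν+D)/(ν + (xₙ-μ)ᵀ Σ⁻¹ (xₙ-μ))` one has `∑ τ ω > 0` and
`μ = (∑ τ ω)⁻¹ • ∑ (τ ω) • xₙ`. -/
theorem studentT_location_update
    (D N : ℕ) (hD : 1 ≤ D) (hN : 1 ≤ N)
    (x : Fin N → Fin D → ℝ) (τ : Fin N → ℝ) (hτ : ∀ n, 0 ≤ τ n)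
    (hτsum : 0 < ∑ n, τ n) (ν : ℝ) (hν : 0 < ν)
    (S : Matrix (Fin D) (Fin D) ℝ) (hSsymm : S.IsSymm) (hS : S.PosDef)
    (F : (Fin D → ℝ) → ℝ)
    (hF : F = fun μ => ∑ n, τ n * (((D : ℝ) + ν) / 2) *
        Real.log (1 + (x n - μ) ⬝ᵥ (S⁻¹ *ᵥ (x n - μ)) / ν))
    (μ : Fin D → ℝ) (hcrit : fderiv ℝ F μ = 0)
    (ω : Fin N → ℝ)
    (hω : ω = fun n => (ν + (D : ℝ)) / (ν + (x n - μ) ⬝ᵥ (S⁻¹ *ᵥ (x n - μ)))) :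
    0 < ∑ n, τ n * ω n ∧
      μ = (∑ n, τ n * ω n)⁻¹ • ∑ n, (τ n * ω n) • x n :=
  studentT_location_update_general D N x τ hτ hτsum ν hν S hS F hF μ hcrit ω hω
end

section
/- Let D ≥ 1, N ≥ 1, let x_1, …, x_N ∈ ℝ^D, μ ∈ ℝ^D, let τ_1, …, τ_N ≥ 0 with ∑_n τ_n > 0, and let ν > 0. Define, on symmetric positive-definite D×D matrices A, the function G(A) = ∑_{n=1}^{N} τ_n · [ −(1/2) ln det A + ((D+ν)/2) ln(1 + (x_n − μ)ᵀ A (x_n − μ)/ν) ]. Suppose A is symmetric positive-definite and for every symmetric D×D matrix H the directional derivative of G at A in direction H vanishes, i.e. d/dt G(A + tH)|_{t=0} = 0. Then, setting ω_n = (ν + D)/(ν + (x_n − μ)ᵀ A (x_n − μ)), one has A⁻¹ = (∑_{n=1}^{N} τ_n ω_n (x_n − μ)(x_n − μ)ᵀ)/(∑_{n=1}^{N} τ_n). (This is the scale-matrix update equation (7) of Proposition 1, with A the precision matrix Σ⁻¹: G equals, up to an additive constant independent of A, the τ-weighted negative log-likelihood of the multivariate Student-t density with scale Σ = A⁻¹.)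 -/
open scoped BigOperators Matrix

/-!
By Jacobi's formula `d/dt log det (A + tH) = tr (A⁻¹H)`, and since `yᵀ(A + tH)y` is affine in `t`,
the derivative of `G` at `A` in direction `H` is `½ tr (M H)` with
`M = ∑ τₙ ωₙ yₙyₙᵀ - (∑ τₙ) A⁻¹`, `yₙ = xₙ - μ`. As `M` is symmetric, the direction `H = M` gives
`tr (M Mᵀ) = 0`, so `M = 0`.
-/

open Matrix

namespace Matrix

variable {n : Type*} [Fintype n]

section Derivatives

variable {𝕜 : Type*} [NontriviallyNormedField 𝕜]

theorem hasDerivAt_det_one_add_smul [DecidableEq n] (B : Matrix n n 𝕜) :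
    HasDerivAt (fun t : 𝕜 => (1 + t • B).det) B.trace 0 := by
  set q := (det (1 + (Polynomial.X : Polynomial 𝕜) • B.map Polynomial.C)).divX.divX
  have hpoly : HasDerivAt (fun t => 1 + B.trace * t + q.eval t * t ^ 2) B.trace 0 := by
    simpa using (((hasDerivAt_id (0 : 𝕜)).const_mul B.trace).const_add 1).fun_add
      ((q.hasDerivAt 0).fun_mul (hasDerivAt_pow 2 (0 : 𝕜)))
  convert hpoly using 1
  exact funext fun t => det_one_add_smul t B

theorem hasDerivAt_det_add_smul [DecidableEq n] {A : Matrix n n 𝕜} (hA : IsUnit A.det)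
    (H : Matrix n n 𝕜) :
    HasDerivAt (fun t : 𝕜 => (A + t • H).det) (A.det * (A⁻¹ * H).trace) 0 := by
  have hfactor : ∀ t : 𝕜, A + t • H = A * (1 + t • (A⁻¹ * H)) := fun t => by
    rw [mul_add, mul_one, Matrix.mul_smul, mul_nonsing_inv_cancel_left _ _ hA]
  simpa only [hfactor, det_mul] using (hasDerivAt_det_one_add_smul (A⁻¹ * H)).const_mul A.det

end Derivatives

theorem hasDerivAt_log_det_add_smul [DecidableEq n] {A : Matrix n n ℝ} (hA : A.det ≠ 0)
    (H : Matrix n n ℝ) :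
    HasDerivAt (fun t : ℝ => Real.log (A + t • H).det) (A⁻¹ * H).trace 0 := by
  have := (hasDerivAt_det_add_smul hA.isUnit H).log (by simpa using hA)
  simpa [hA] using this

theorem trace_vecMulVec_self_mul {R : Type*} [CommSemiring R] (y : n → R) (H : Matrix n n R) :
    (vecMulVec y y * H).trace = y ⬝ᵥ (H *ᵥ y) := by
  rw [vecMulVec_mul, trace_vecMulVec, dotProduct_mulVec, dotProduct_comm]

theorem hasDerivAt_log_one_add_dotProduct_mulVec_div {A : Matrix n n ℝ} (H : Matrix n n ℝ)
    (y : n → ℝ) {ν : ℝ} (hν : ν ≠ 0) (hc : ν + y ⬝ᵥ (A *ᵥ y) ≠ 0) :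
    HasDerivAt (fun t : ℝ => Real.log (1 + y ⬝ᵥ ((A + t • H) *ᵥ y) / ν))
      (y ⬝ᵥ (H *ᵥ y) / (ν + y ⬝ᵥ (A *ᵥ y))) 0 := by
  set c := y ⬝ᵥ (A *ᵥ y)
  set d := y ⬝ᵥ (H *ᵥ y)
  have haffine : ∀ t : ℝ, y ⬝ᵥ ((A + t • H) *ᵥ y) = c + t * d := fun t => by
    rw [add_mulVec, smul_mulVec, dotProduct_add, dotProduct_smul, smul_eq_mul]
  have hlin : HasDerivAt (fun t : ℝ => 1 + (c + t * d) / ν) (d / ν) 0 := by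
    simpa using ((((hasDerivAt_id (0 : ℝ)).mul_const d).const_add c).div_const ν).const_add 1
  have hne : 1 + (c + 0 * d) / ν ≠ 0 := by
    rw [zero_mul, add_zero, one_add_div hν]
    exact div_ne_zero hc hν
  simp only [haffine]
  convert hlin.log hne using 1
  rw [zero_mul, add_zero]
  field_simp

theorem IsSymm.eq_zero_of_forall_trace_mul_eq_zero {M : Matrix n n ℝ} (hM : M.IsSymm)
    (h : ∀ H : Matrix n n ℝ, H.IsSymm → (M * H).trace = 0) : M = 0 := by
  have hMM : (M * Mᴴ).trace = 0 := by
    rw [conjTranspose_eq_transpose_of_trivial, hM.eq]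
    exact h M hM
  exact trace_mul_conjTranspose_self_eq_zero_iff.mp hMM

theorem hasDerivAt_studentT_negLogLik_term [DecidableEq n] {A : Matrix n n ℝ} (hA : A.PosDef)
    (H : Matrix n n ℝ) (y : n → ℝ) {ν : ℝ} (hν : 0 < ν) (k : ℝ) :
    HasDerivAt (fun t : ℝ => -(1 / 2) * Real.log (A + t • H).det +
        k / 2 * Real.log (1 + y ⬝ᵥ ((A + t • H) *ᵥ y) / ν))
      (1 / 2 * (((k / (ν + y ⬝ᵥ (A *ᵥ y))) • vecMulVec y y - A⁻¹) * H).trace) 0 := by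
  have hc : 0 < ν + y ⬝ᵥ (A *ᵥ y) := by
    have := hA.posSemidef.dotProduct_mulVec_nonneg y
    simp only [star_trivial] at this
    linarith
  have hlogdet := (hasDerivAt_log_det_add_smul hA.det_pos.ne' H).const_mul (-(1 / 2))
  have hlogquad := (hasDerivAt_log_one_add_dotProduct_mulVec_div H y hν.ne' hc.ne').const_mul (k / 2)
  refine (hlogdet.add hlogquad).congr_deriv ?_
  rw [sub_mul, trace_sub, smul_mul, trace_smul, smul_eq_mul, trace_vecMulVec_self_mul]
  ring

end Matrix

theorem studentT_scale_update_general
    (D N : ℕ)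
    (x : Fin N → Fin D → ℝ) (μ : Fin D → ℝ)
    (τ : Fin N → ℝ) (hτsum : 0 < ∑ n, τ n)
    (ν : ℝ) (hν : 0 < ν)
    (G : Matrix (Fin D) (Fin D) ℝ → ℝ)
    (hG : G = fun A => ∑ n, τ n *
        (-(1 / 2) * Real.log A.det +
          (((D : ℝ) + ν) / 2) * Real.log (1 + (x n - μ) ⬝ᵥ (A *ᵥ (x n - μ)) / ν)))
    (A : Matrix (Fin D) (Fin D) ℝ) (hA : A.PosDef)
    (hcrit : ∀ H : Matrix (Fin D) (Fin D) ℝ, H.IsSymm →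
        deriv (fun t : ℝ => G (A + t • H)) 0 = 0)
    (ω : Fin N → ℝ)
    (hω : ω = fun n => (ν + (D : ℝ)) / (ν + (x n - μ) ⬝ᵥ (A *ᵥ (x n - μ)))) :
    A⁻¹ = (∑ n, τ n)⁻¹ •
        ∑ n, (τ n * ω n) • Matrix.vecMulVec (x n - μ) (x n - μ) := by
  set S := ∑ n, (τ n * ω n) • vecMulVec (x n - μ) (x n - μ)
  set M := S - (∑ n, τ n) • A⁻¹
  have hderiv (H : Matrix (Fin D) (Fin D) ℝ) :
      HasDerivAt (fun t : ℝ => G (A + t • H)) (1 / 2 * (M * H).trace) 0 := by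
    subst hG
    refine (HasDerivAt.fun_sum fun n _ =>
      (hasDerivAt_studentT_negLogLik_term hA H (x n - μ) hν (D + ν)).const_mul (τ n)).congr_deriv ?_
    simp only [M, S, hω, sub_mul, trace_sub, Finset.sum_mul, trace_sum, smul_mul, trace_smul,
      smul_eq_mul, add_comm ν (D : ℝ)]
    rw [← Finset.sum_sub_distrib, Finset.mul_sum]
    exact Finset.sum_congr rfl fun n _ => by ring
  have hS : S.IsSymm := by
    simp only [S, IsSymm, transpose_sum, transpose_smul, transpose_vecMulVec]
  have hM : M.IsSymm := hS.sub ((isHermitian_iff_isSymm.mp hA.isHermitian).inv.smul _)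
  have hM0 : M = 0 := hM.eq_zero_of_forall_trace_mul_eq_zero fun H hH => by
    simpa using (hderiv H).deriv.symm.trans (hcrit H hH)
  rw [sub_eq_zero] at hM0
  rw [hM0, smul_smul, inv_mul_cancel₀ hτsum.ne', one_smul]

/-- scale-matrix update, Equation 7 of Proposition 1: if the symmetric
positive-definite precision matrix `A` is a critical point (in all symmetric directions)
of `G A = ∑ n, τ n * (-(1/2) * log (det A) + ((D+ν)/2) * log (1 + (xₙ-μ)ᵀ A (xₙ-μ)/ν))`,
then `A⁻¹ = (∑ τ)⁻¹ • ∑ (τ ω) • (xₙ-μ)(xₙ-μ)ᵀ` with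
`ω n = (ν+D)/(ν + (xₙ-μ)ᵀ A (xₙ-μ))`. -/
theorem studentT_scale_update
    (D N : ℕ) (hD : 1 ≤ D) (hN : 1 ≤ N)
    (x : Fin N → Fin D → ℝ) (μ : Fin D → ℝ)
    (τ : Fin N → ℝ) (hτ : ∀ n, 0 ≤ τ n) (hτsum : 0 < ∑ n, τ n)
    (ν : ℝ) (hν : 0 < ν)
    (G : Matrix (Fin D) (Fin D) ℝ → ℝ)
    (hG : G = fun A => ∑ n, τ n *
        (-(1 / 2) * Real.log A.det +
          (((D : ℝ) + ν) / 2) * Real.log (1 + (x n - μ) ⬝ᵥ (A *ᵥ (x n - μ)) / ν)))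
    (A : Matrix (Fin D) (Fin D) ℝ) (hAsymm : A.IsSymm) (hA : A.PosDef)
    (hcrit : ∀ H : Matrix (Fin D) (Fin D) ℝ, H.IsSymm →
        deriv (fun t : ℝ => G (A + t • H)) 0 = 0)
    (ω : Fin N → ℝ)
    (hω : ω = fun n => (ν + (D : ℝ)) / (ν + (x n - μ) ⬝ᵥ (A *ᵥ (x n - μ)))) :
    A⁻¹ = (∑ n, τ n)⁻¹ •
        ∑ n, (τ n * ω n) • Matrix.vecMulVec (x n - μ) (x n - μ) :=
  studentT_scale_update_general D N x μ τ hτsum ν hν G hG A hA hcrit ω hω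
end

section
/- Let D ≥ 1, N ≥ 1, let x_1, …, x_N ∈ ℝ^D, μ ∈ ℝ^D, let Σ be a symmetric positive-definite D×D real matrix, and let τ_1, …, τ_N ≥ 0 with N' := ∑_n τ_n > 0. Let ψ denote the digamma function, ψ(x) = Γ'(x)/Γ(x) (the derivative of ln Γ). Define g : (0, ∞) → ℝ by g(ν) = −∑_{n=1}^{N} τ_n ln p(x_n; ν, μ, Σ), where p is the multivariate Student-t density. If ν > 0 satisfies g'(ν) = 0, then, setting ω_n(ν) = (ν + D)/(ν + d_Σ(x_n, μ)²), one has ln(ν/2) − ψ(ν/2) = ln((ν + D)/2) − ψ((ν + D)/2) − 1 − (1/N') ∑_{n=1}^{N} τ_n (ln ω_n(ν) − ω_n(ν)). (This is the degrees-of-freedom update equation (8) of Proposition 1, using ln((ν+D)/2) − ln(ν/2) = ln((ν+D)/ν).) -/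
open scoped BigOperators Matrix

/-- The multivariate Student-t density on `ℝ^D` with degrees of freedom `ν`,
location `μ` and scale matrix `S` (Definition 1 of the paper). -/
noncomputable def studentTDensity (D : ℕ) (ν : ℝ) (μ : Fin D → ℝ)
    (S : Matrix (Fin D) (Fin D) ℝ) (x : Fin D → ℝ) : ℝ :=
  Real.Gamma (((D : ℝ) + ν) / 2) /
      (Real.Gamma (ν / 2) * (ν * Real.pi) ^ ((D : ℝ) / 2) * S.det ^ ((1 : ℝ) / 2)) *
    (1 + (x - μ) ⬝ᵥ (S⁻¹ *ᵥ (x - μ)) / ν) ^ (-(((D : ℝ) + ν) / 2))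

/-- The digamma function `ψ = (log ∘ Γ)'`. -/
noncomputable def digamma : ℝ → ℝ := deriv fun t => Real.log (Real.Gamma t)

/-!
For `ν > 0` the log-density is `log Γ((ν+D)/2) - log Γ(ν/2) + (ν/2) log ν
- ((ν+D)/2) log (ν + d_Σ(x, μ)²)` up to terms independent of `ν`, so its `ν`-derivative is
`(c(ν) + log ω - ω) / 2` with `c(ν) = log (ν/2) - ψ(ν/2) - log ((ν+D)/2) + ψ((ν+D)/2) + 1`,
the same for every data point. At a critical point of `g` this gives
`N' c(ν) + ∑ τₙ (log ωₙ - ωₙ) = 0`.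
-/

open Real

noncomputable def studentTWeight (D : ℕ) (ν : ℝ) (μ : Fin D → ℝ)
    (S : Matrix (Fin D) (Fin D) ℝ) (x : Fin D → ℝ) : ℝ :=
  (ν + D) / (ν + (x - μ) ⬝ᵥ (S⁻¹ *ᵥ (x - μ)))

lemma hasDerivAt_log_Gamma {s : ℝ} (hs : 0 < s) :
    HasDerivAt (fun t => log (Gamma t)) (digamma s) s := by
  have hs' : ∀ m : ℕ, s ≠ -m := fun m h => by
    linarith [h ▸ hs, (Nat.cast_nonneg m : (0 : ℝ) ≤ m)]
  exact ((differentiableAt_Gamma hs').log (Gamma_pos_of_pos hs).ne').hasDerivAt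

lemma Matrix.PosDef.dotProduct_inv_mulVec_nonneg {n : Type*} [Fintype n] [DecidableEq n]
    {S : Matrix n n ℝ} (hS : S.PosDef) (v : n → ℝ) : 0 ≤ v ⬝ᵥ (S⁻¹ *ᵥ v) :=
  hS.inv.posSemidef.dotProduct_mulVec_nonneg v

lemma log_studentTDensity {D : ℕ} {S : Matrix (Fin D) (Fin D) ℝ} (hS : S.PosDef)
    (μ x : Fin D → ℝ) {t : ℝ} (ht : 0 < t) :
    log (studentTDensity D t μ S x) =
      log (Gamma ((t + D) / 2)) - log (Gamma (t / 2)) + t / 2 * log t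
        - (t + D) / 2 * log (t + (x - μ) ⬝ᵥ (S⁻¹ *ᵥ (x - μ)))
        - D / 2 * log π - 1 / 2 * log S.det := by
  set d := (x - μ) ⬝ᵥ (S⁻¹ *ᵥ (x - μ))
  have hd : 0 ≤ d := hS.dotProduct_inv_mulVec_nonneg _
  have hΓ₁ : 0 < Gamma ((t + D) / 2) := Gamma_pos_of_pos (by positivity)
  have hΓ₂ : 0 < Gamma (t / 2) := Gamma_pos_of_pos (by positivity)
  have hdet : 0 < S.det := hS.det_pos
  have hbase : 1 + d / t = (t + d) / t := by field_simp
  rw [studentTDensity, add_comm (D : ℝ) t, hbase,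
    log_mul (by positivity) (by positivity), log_div hΓ₁.ne' (by positivity),
    log_mul (by positivity) (by positivity), log_mul hΓ₂.ne' (by positivity),
    log_rpow (by positivity), log_rpow hdet, log_rpow (by positivity),
    log_mul ht.ne' pi_pos.ne', log_div (by positivity) ht.ne']
  ring

lemma hasDerivAt_log_studentTDensity {D : ℕ} {S : Matrix (Fin D) (Fin D) ℝ} (hS : S.PosDef)
    (μ x : Fin D → ℝ) {ν : ℝ} (hν : 0 < ν) :
    HasDerivAt (fun t => log (studentTDensity D t μ S x))
      ((log (ν / 2) - digamma (ν / 2) - (log ((ν + D) / 2) - digamma ((ν + D) / 2)) + 1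
        + (log (studentTWeight D ν μ S x) - studentTWeight D ν μ S x)) / 2) ν := by
  unfold studentTWeight
  set d := (x - μ) ⬝ᵥ (S⁻¹ *ᵥ (x - μ))
  have hd : 0 ≤ d := hS.dotProduct_inv_mulVec_nonneg _
  have hνd : 0 < ν + d := by positivity
  have hνD : 0 < ν + D := by positivity
  have half_add (a : ℝ) : HasDerivAt (fun t : ℝ => (t + a) / 2) (1 / 2) ν := by
    simpa using ((hasDerivAt_id ν).add_const a).div_const 2
  have hΓ₁ := (hasDerivAt_log_Gamma (by positivity : 0 < (ν + D) / 2)).comp ν (half_add D)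
  have hΓ₂ := (hasDerivAt_log_Gamma (by positivity : 0 < (ν + 0) / 2)).comp ν (half_add 0)
  simp only [add_zero] at hΓ₂
  have hνlogν := (hasDerivAt_mul_log hν.ne').div_const 2
  have hlog := (half_add D).mul (((hasDerivAt_id ν).add_const d).log hνd.ne')
  have hformula := ((((hΓ₁.sub hΓ₂).add hνlogν).sub hlog).sub_const (D / 2 * log π)).sub_const
    (1 / 2 * log S.det)
  have heq : (fun t => log (studentTDensity D t μ S x)) =ᶠ[nhds ν] fun t =>
      log (Gamma ((t + D) / 2)) - log (Gamma (t / 2)) + t * log t / 2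
        - (t + D) / 2 * log (t + d) - D / 2 * log π - 1 / 2 * log S.det := by
    filter_upwards [Ioi_mem_nhds hν] with t ht
    rw [log_studentTDensity hS μ x ht]
    ring
  refine (hformula.congr_of_eventuallyEq heq).congr_deriv ?_
  rw [log_div hνD.ne' hνd.ne', log_div hνD.ne' two_ne_zero, log_div hν.ne' two_ne_zero]
  simp only [id]
  field_simp
  ring

theorem studentT_dof_update_general
    (D N : ℕ)
    (x : Fin N → Fin D → ℝ) (μ : Fin D → ℝ)
    (S : Matrix (Fin D) (Fin D) ℝ) (hS : S.PosDef)
    (τ : Fin N → ℝ) (hτsum : 0 < ∑ n, τ n)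
    (g : ℝ → ℝ)
    (hg : g = fun ν => -∑ n, τ n * Real.log (studentTDensity D ν μ S (x n)))
    (ν : ℝ) (hν : 0 < ν) (hcrit : deriv g ν = 0)
    (ω : Fin N → ℝ)
    (hω : ω = fun n => (ν + (D : ℝ)) / (ν + (x n - μ) ⬝ᵥ (S⁻¹ *ᵥ (x n - μ)))) :
    Real.log (ν / 2) - digamma (ν / 2) =
      Real.log ((ν + (D : ℝ)) / 2) - digamma ((ν + (D : ℝ)) / 2) - 1 -
        (∑ n, τ n)⁻¹ * ∑ n, τ n * (Real.log (ω n) - ω n) := by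
  set c := log (ν / 2) - digamma (ν / 2) - (log ((ν + D) / 2) - digamma ((ν + D) / 2)) + 1
    with hc
  have hderiv : HasDerivAt g (-∑ n, τ n * ((c + (log (ω n) - ω n)) / 2)) ν := by
    subst hg hω
    exact (HasDerivAt.fun_sum fun n _ =>
      (hasDerivAt_log_studentTDensity hS μ (x n) hν).const_mul (τ n)).neg
  have hmean : (∑ n, τ n)⁻¹ * ∑ n, τ n * (log (ω n) - ω n) = -c := by
    have h := hderiv.deriv.symm.trans hcrit
    simp only [mul_div_assoc', ← Finset.sum_div, mul_add, Finset.sum_add_distrib,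
      ← Finset.sum_mul] at h
    field_simp
    linarith
  rw [hmean, hc]
  ring

/-- degrees-of-freedom update, Equation 8 of Proposition 1: if `ν > 0` is a
critical point of the τ-weighted negative Student-t log-likelihood
`g ν = -∑ n, τ n * log p(xₙ; ν, μ, Σ)`, then
`log (ν/2) - ψ(ν/2) = log ((ν+D)/2) - ψ((ν+D)/2) - 1 - (1/N') ∑ τₙ (log ωₙ(ν) - ωₙ(ν))`
with `ωₙ(ν) = (ν+D)/(ν + d_Σ(xₙ,μ)²)` and `N' = ∑ τₙ`. -/
theorem studentT_dof_update
    (D N : ℕ) (hD : 1 ≤ D) (hN : 1 ≤ N)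
    (x : Fin N → Fin D → ℝ) (μ : Fin D → ℝ)
    (S : Matrix (Fin D) (Fin D) ℝ) (hSsymm : S.IsSymm) (hS : S.PosDef)
    (τ : Fin N → ℝ) (hτ : ∀ n, 0 ≤ τ n) (hτsum : 0 < ∑ n, τ n)
    (g : ℝ → ℝ)
    (hg : g = fun ν => -∑ n, τ n * Real.log (studentTDensity D ν μ S (x n)))
    (ν : ℝ) (hν : 0 < ν) (hcrit : deriv g ν = 0)
    (ω : Fin N → ℝ)
    (hω : ω = fun n => (ν + (D : ℝ)) / (ν + (x n - μ) ⬝ᵥ (S⁻¹ *ᵥ (x n - μ)))) :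
    Real.log (ν / 2) - digamma (ν / 2) =
      Real.log ((ν + (D : ℝ)) / 2) - digamma ((ν + (D : ℝ)) / 2) - 1 -
        (∑ n, τ n)⁻¹ * ∑ n, τ n * (Real.log (ω n) - ω n) :=
  studentT_dof_update_general D N x μ S hS τ hτsum g hg ν hν hcrit ω hω
end

section
/- Let D ≥ 1, ν > 0, μ ∈ ℝ^D, and let Σ be a symmetric positive-definite D×D real matrix. Then the multivariate Student-t density integrates to one: ∫_{ℝ^D} Γ((D+ν)/2) / (Γ(ν/2) (νπ)^{D/2} (det Σ)^{1/2}) · (1 + (x − μ)ᵀ Σ⁻¹ (x − μ)/ν)^{−(D+ν)/2} dx = 1, where the integral is with respect to Lebesgue measure on ℝ^D. -/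
open scoped BigOperators Matrix

/-!
Write `S = A * A` with `A` symmetric. The substitution `x = μ + A y` has Jacobian
`|det A| = (det S)^(1/2)` and turns the quadratic form into `∑ yᵢ²`, so everything reduces to
`∫ (1 + ∑ yᵢ²/ν)^(-s) dy` with `s = (D + ν)/2`. That integral is computed by Gamma subordination:
`Γ(s) (1 + q)^(-s) = ∫₀^∞ t^(s-1) e^(-(1+q)t) dt`; after exchanging the integrals (Tonelli) the
`y`-integral is Gaussian, equal to `(νπ/t)^(D/2)`, and what remains is `(νπ)^(D/2) Γ(s - D/2)`.
-/

open MeasureTheory Set Real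

-- A nonzero Bochner integral certifies integrability, which is all the conversion needs.
lemma lintegral_ofReal_eq_ofReal_integral_of_ne_zero {α : Type*} [MeasurableSpace α]
    {μ : Measure α} {f : α → ℝ} (hf : 0 ≤ᵐ[μ] f) (h : ∫ x, f x ∂μ ≠ 0) :
    ∫⁻ x, ENNReal.ofReal (f x) ∂μ = ENNReal.ofReal (∫ x, f x ∂μ) :=
  (ofReal_integral_eq_lintegral_ofReal (Integrable.of_integral_ne_zero h) hf).symm

lemma lintegral_rpow_mul_exp_neg_mul_Ioi {a r : ℝ} (ha : 0 < a) (hr : 0 < r) :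
    ∫⁻ t in Ioi 0, ENNReal.ofReal (t ^ (a - 1) * exp (-(r * t)))
      = ENNReal.ofReal (Gamma a * r ^ (-a)) := by
  have hval : Gamma a * r ^ (-a) = ∫ t in Ioi 0, t ^ (a - 1) * exp (-(r * t)) := by
    rw [integral_rpow_mul_exp_neg_mul_Ioi ha hr, one_div, inv_rpow hr.le, rpow_neg hr.le, mul_comm]
  rw [hval]
  refine lintegral_ofReal_eq_ofReal_integral_of_ne_zero ?_ ?_
  · filter_upwards [ae_restrict_mem measurableSet_Ioi] with t (ht : 0 < t)
    positivity
  · rw [← hval]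
    have := Gamma_pos_of_pos ha
    positivity

lemma integral_exp_neg_mul_sum_sq (ι : Type*) [Fintype ι] (b : ℝ) :
    ∫ y : ι → ℝ, exp (-(b * ∑ i, y i ^ 2)) = √(π / b) ^ Fintype.card ι := by
  simp_rw [Finset.mul_sum, ← Finset.sum_neg_distrib, exp_sum, ← neg_mul]
  rw [volume_pi, integral_fintype_prod_eq_pow fun x : ℝ => exp (-b * x ^ 2), integral_gaussian]

lemma lintegral_exp_neg_mul_sum_sq (ι : Type*) [Fintype ι] {b : ℝ} (hb : 0 < b) :
    ∫⁻ y : ι → ℝ, ENNReal.ofReal (exp (-(b * ∑ i, y i ^ 2)))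
      = ENNReal.ofReal ((π / b) ^ (Fintype.card ι / 2 : ℝ)) := by
  have hval :
      (π / b) ^ (Fintype.card ι / 2 : ℝ) = ∫ y : ι → ℝ, exp (-(b * ∑ i, y i ^ 2)) := by
    rw [integral_exp_neg_mul_sum_sq, sqrt_eq_rpow, ← rpow_mul_natCast (by positivity)]
    ring_nf
  rw [hval]
  refine lintegral_ofReal_eq_ofReal_integral_of_ne_zero
    (Filter.Eventually.of_forall fun y => (exp_pos _).le) ?_
  rw [← hval]
  positivity

lemma lintegral_exp_neg_mul_one_add_sum_sq_div (ι : Type*) [Fintype ι] {c t : ℝ}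
    (hc : 0 < c) (ht : 0 < t) :
    ∫⁻ y : ι → ℝ, ENNReal.ofReal (exp (-((1 + (∑ i, y i ^ 2) / c) * t)))
      = ENNReal.ofReal (exp (-t) * (c * π / t) ^ (Fintype.card ι / 2 : ℝ)) := by
  have hsplit (y : ι → ℝ) : ENNReal.ofReal (exp (-((1 + (∑ i, y i ^ 2) / c) * t)))
      = ENNReal.ofReal (exp (-t)) * ENNReal.ofReal (exp (-(t / c * ∑ i, y i ^ 2))) := by
    rw [← ENNReal.ofReal_mul (exp_pos _).le, ← exp_add]
    congr 2
    ring
  simp_rw [hsplit]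
  rw [lintegral_const_mul' _ _ ENNReal.ofReal_ne_top,
    lintegral_exp_neg_mul_sum_sq ι (by positivity), ← ENNReal.ofReal_mul (exp_pos _).le,
    div_div_eq_mul_div, mul_comm π c]

lemma Gamma_mul_lintegral_one_add_sum_sq_div_rpow_neg (ι : Type*) [Fintype ι] {c s : ℝ}
    (hc : 0 < c) (hs : Fintype.card ι / 2 < s) :
    ENNReal.ofReal (Gamma s) * ∫⁻ y : ι → ℝ, ENNReal.ofReal ((1 + (∑ i, y i ^ 2) / c) ^ (-s))
      = ENNReal.ofReal
          ((c * π) ^ (Fintype.card ι / 2 : ℝ) * Gamma (s - Fintype.card ι / 2)) := by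
  set m : ℝ := Fintype.card ι / 2
  have hs₀ : 0 < s := (by positivity : 0 ≤ m).trans_lt hs
  set q : (ι → ℝ) → ℝ := fun y => ∑ i, y i ^ 2
  set F : (ι → ℝ) → ℝ → ENNReal :=
    fun y t => ENNReal.ofReal (t ^ (s - 1) * exp (-((1 + q y / c) * t)))
  have subordination (y : ι → ℝ) :
      ENNReal.ofReal (Gamma s) * ENNReal.ofReal ((1 + q y / c) ^ (-s))
        = ∫⁻ t in Ioi 0, F y t := by
    rw [lintegral_rpow_mul_exp_neg_mul_Ioi hs₀ (by positivity),
      ← ENNReal.ofReal_mul (Gamma_pos_of_pos hs₀).le]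
  have gaussian (t : ℝ) (ht : t ∈ Ioi 0) :
      ∫⁻ y, F y t
        = ENNReal.ofReal ((c * π) ^ m) * ENNReal.ofReal (t ^ (s - m - 1) * exp (-(1 * t))) := by
    have ht : 0 < t := ht
    have hsplit (y : ι → ℝ) : F y t
        = ENNReal.ofReal (t ^ (s - 1)) * ENNReal.ofReal (exp (-((1 + q y / c) * t))) :=
      ENNReal.ofReal_mul (rpow_nonneg ht.le _)
    simp_rw [hsplit]
    rw [lintegral_const_mul' _ _ ENNReal.ofReal_ne_top,
      lintegral_exp_neg_mul_one_add_sum_sq_div ι hc ht, ← ENNReal.ofReal_mul (rpow_nonneg ht.le _),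
      ← ENNReal.ofReal_mul (by positivity)]
    congr 1
    rw [div_rpow (by positivity) ht.le, rpow_sub ht, rpow_sub ht, rpow_sub ht, rpow_one, one_mul]
    simp only [m]
    field_simp
  have hF : AEMeasurable (Function.uncurry F)
      ((volume : Measure (ι → ℝ)).prod (volume.restrict (Ioi 0))) := by
    refine (Measurable.ennreal_ofReal ?_).aemeasurable
    exact ((measurable_id.pow_const _).comp measurable_snd).mul (by fun_prop)
  calc ENNReal.ofReal (Gamma s) * ∫⁻ y, ENNReal.ofReal ((1 + q y / c) ^ (-s))
      = ∫⁻ y, ∫⁻ t in Ioi 0, F y t := by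
        rw [← lintegral_const_mul' _ _ ENNReal.ofReal_ne_top]
        simp_rw [subordination]
    _ = ∫⁻ t in Ioi 0, ∫⁻ y, F y t := lintegral_lintegral_swap hF
    _ = ∫⁻ t in Ioi 0,
          ENNReal.ofReal ((c * π) ^ m) * ENNReal.ofReal (t ^ (s - m - 1) * exp (-(1 * t))) :=
        setLIntegral_congr_fun measurableSet_Ioi gaussian
    _ = ENNReal.ofReal ((c * π) ^ m * Gamma (s - m)) := by
        rw [lintegral_const_mul' _ _ ENNReal.ofReal_ne_top,
          lintegral_rpow_mul_exp_neg_mul_Ioi (sub_pos.2 hs) one_pos,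
          ← ENNReal.ofReal_mul (by positivity), one_rpow, mul_one]

lemma integral_one_add_sum_sq_div_rpow_neg (ι : Type*) [Fintype ι] {c s : ℝ}
    (hc : 0 < c) (hs : Fintype.card ι / 2 < s) :
    ∫ y : ι → ℝ, (1 + (∑ i, y i ^ 2) / c) ^ (-s)
      = (c * π) ^ (Fintype.card ι / 2 : ℝ) * Gamma (s - Fintype.card ι / 2) / Gamma s := by
  have hΓ : 0 < Gamma s := Gamma_pos_of_pos ((by positivity : (0 : ℝ) ≤ _).trans_lt hs)
  rw [integral_eq_lintegral_of_nonneg_ae (ae_of_all _ fun y => by positivity)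
      (by fun_prop : Measurable _).aestronglyMeasurable, eq_div_iff hΓ.ne', mul_comm,
    ← ENNReal.toReal_ofReal hΓ.le, ← ENNReal.toReal_mul,
    Gamma_mul_lintegral_one_add_sum_sq_div_rpow_neg ι hc hs, ENNReal.toReal_ofReal]
  have := Gamma_pos_of_pos (sub_pos.2 hs)
  positivity

lemma integral_comp_add_mulVec {ι E : Type*} [Fintype ι] [DecidableEq ι] [NormedAddCommGroup E]
    [NormedSpace ℝ E] {B : Matrix ι ι ℝ} (hB : B.det ≠ 0) (μ : ι → ℝ) (g : (ι → ℝ) → E) :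
    ∫ x, g x = |B.det| • ∫ y, g (μ + B *ᵥ y) := by
  let L : (ι → ℝ) →L[ℝ] ι → ℝ := LinearMap.toContinuousLinearMap (Matrix.toLin' B)
  have hderiv (y : ι → ℝ) (_ : y ∈ univ) :
      HasFDerivWithinAt (fun y => μ + B *ᵥ y) L univ y :=
    (L.hasFDerivAt.const_add μ).hasFDerivWithinAt
  have hinj : InjOn (fun y => μ + B *ᵥ y) univ :=
    ((add_right_injective μ).comp
      (Matrix.mulVec_injective_of_isUnit ((B.isUnit_iff_isUnit_det).2 hB.isUnit))).injOn
  have hsurj : (fun y => μ + B *ᵥ y) '' univ = univ := by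
    refine image_univ_of_surjective fun x => ⟨B⁻¹ *ᵥ (x - μ), ?_⟩
    simp [Matrix.mulVec_mulVec, Matrix.mul_nonsing_inv _ hB.isUnit]
  have hdet : L.det = B.det := by
    rw [ContinuousLinearMap.det, LinearMap.coe_toContinuousLinearMap, LinearMap.det_toLin']
  simpa only [hsurj, hdet, Measure.restrict_univ, integral_smul] using
    integral_image_eq_integral_abs_det_fderiv_smul volume MeasurableSet.univ hderiv hinj g

lemma Matrix.IsSymm.mulVec_dotProduct_mul_self_inv_mulVec {ι : Type*} [Fintype ι] [DecidableEq ι]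
    {A : Matrix ι ι ℝ} (hA : A.IsSymm) (hdet : A.det ≠ 0) (y : ι → ℝ) :
    A *ᵥ y ⬝ᵥ (A * A)⁻¹ *ᵥ (A *ᵥ y) = y ⬝ᵥ y := by
  have hcancel : A⁻¹ *ᵥ (A *ᵥ y) = y := by
    rw [Matrix.mulVec_mulVec, Matrix.nonsing_inv_mul _ hdet.isUnit, Matrix.one_mulVec]
  rw [Matrix.mul_inv_rev, ← Matrix.mulVec_mulVec, hcancel, dotProduct_comm,
    Matrix.dotProduct_mulVec, ← hA.eq, Matrix.vecMul_transpose, hA.eq, Matrix.mulVec_mulVec,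
    Matrix.mul_nonsing_inv _ hdet.isUnit, Matrix.one_mulVec]

open scoped MatrixOrder in
lemma Matrix.PosDef.exists_isSymm_mul_self_eq {ι : Type*} [Fintype ι] [DecidableEq ι]
    {S : Matrix ι ι ℝ} (hS : S.PosDef) : ∃ A : Matrix ι ι ℝ, A.IsSymm ∧ A * A = S := by
  refine ⟨CFC.sqrt S, ?_, CFC.sqrt_mul_sqrt_self S hS.posSemidef.nonneg⟩
  have h : star (CFC.sqrt S) = CFC.sqrt S := (CFC.sqrt_nonneg S).isSelfAdjoint
  rwa [Matrix.star_eq_conjTranspose, Matrix.conjTranspose_eq_transpose_of_trivial] at h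

theorem studentT_integral_eq_one_general
    (D : ℕ) (ν : ℝ) (hν : 0 < ν) (μ : Fin D → ℝ)
    (S : Matrix (Fin D) (Fin D) ℝ) (hS : S.PosDef) :
    ∫ x : Fin D → ℝ, studentTDensity D ν μ S x = 1 := by
  obtain ⟨A, hA, rfl⟩ := hS.exists_isSymm_mul_self_eq
  have hdetA : A.det ≠ 0 := fun h => by simpa [Matrix.det_mul, h] using hS.det_pos
  have hdens (y : Fin D → ℝ) : studentTDensity D ν μ (A * A) (μ + A *ᵥ y) =
      Gamma ((D + ν) / 2) / (Gamma (ν / 2) * (ν * π) ^ ((D : ℝ) / 2) * (A * A).det ^ ((1 : ℝ) / 2))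
        * (1 + (∑ i, y i ^ 2) / ν) ^ (-((D + ν) / 2)) := by
    rw [studentTDensity, add_sub_cancel_left, hA.mulVec_dotProduct_mul_self_inv_mulVec hdetA]
    simp only [dotProduct, sq]
  have hsqrt : (A * A).det ^ ((1 : ℝ) / 2) = |A.det| := by
    rw [Matrix.det_mul, ← sqrt_eq_rpow, sqrt_mul_self_eq_abs]
  rw [integral_comp_add_mulVec hdetA μ, funext hdens, integral_const_mul,
    integral_one_add_sum_sq_div_rpow_neg (Fin D) hν (by rw [Fintype.card_fin]; linarith), Fintype.card_fin,
    show ((D : ℝ) + ν) / 2 - D / 2 = ν / 2 by ring, hsqrt, smul_eq_mul]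
  have hΓs := Gamma_pos_of_pos (by positivity : 0 < ((D : ℝ) + ν) / 2)
  have hΓν := Gamma_pos_of_pos (by positivity : 0 < ν / 2)
  have habs : 0 < |A.det| := abs_pos.2 hdetA
  field_simp

/-- the multivariate Student-t density integrates to one with respect to
Lebesgue measure on `ℝ^D`. -/
theorem studentT_integral_eq_one
    (D : ℕ) (hD : 1 ≤ D) (ν : ℝ) (hν : 0 < ν) (μ : Fin D → ℝ)
    (S : Matrix (Fin D) (Fin D) ℝ) (hSsymm : S.IsSymm) (hS : S.PosDef) :
    ∫ x : Fin D → ℝ, studentTDensity D ν μ S x = 1 :=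
  studentT_integral_eq_one_general D ν hν μ S hS
end
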